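/- arXiv:2603.28192 — 2 statements merged into one kernel-verified Lean document; each statement's English description precedes it below -/
import Mathlib

section
/- Let A be an n×n real matrix that is Hurwitz (all eigenvalues have negative real part) and let P be a real symmetric n×n matrix satisfying AᵀP + PA ⪯ 0 (negative semidefinite). Then P is positive semidefinite. -/
/-!
Along a trajectory `y t = exp (t A) x` the quadratic form `V t = yᵀ P y` has derivative
`yᵀ (AᵀP + PA) y ≤ 0`, so `V` is antitone. Since `A` is Hurwitz, `exp (t A) → 0`: on a
generalized eigenspace for `μ` (with `re μ < 0`) the exponential acts as `e^{tμ}` times a polynomial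
in `t`, and these spaces span `ℂⁿ`. Hence `xᵀ P x = V 0 ≥ lim V = 0`.
-/

open Matrix

def IsHurwitz {n : ℕ} (A : Matrix (Fin n) (Fin n) ℝ) : Prop :=
  ∀ μ ∈ spectrum ℂ (A.map (Complex.ofReal ·)), μ.re < 0

open NormedSpace Filter Topology Finset Nat

attribute [local instance] Matrix.linftyOpNormedAddCommGroup Matrix.linftyOpNormedRing
  Matrix.linftyOpNormedAlgebra

variable {m : Type*} [Fintype m] [DecidableEq m]

theorem Matrix.exp_add_smul_one {𝕂 : Type*} [RCLike 𝕂] (M : Matrix m m 𝕂) (z : 𝕂) :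
    exp (M + z • 1) = exp z • exp M := by
  rw [Matrix.exp_add_of_commute _ _ ((Commute.one_right M).smul_right z), smul_one_eq_diagonal,
    exp_diagonal]
  ext i j
  simp [Pi.coe_exp, mul_comm]

theorem Matrix.exp_mulVec_eq_sum_of_pow_mulVec_eq_zero {𝕂 : Type*} [RCLike 𝕂]
    {N : Matrix m m 𝕂} {w : m → 𝕂} {k : ℕ} (hk : N ^ k *ᵥ w = 0) :
    exp N *ᵥ w = ∑ j ∈ range k, (j ! : 𝕂)⁻¹ • (N ^ j *ᵥ w) := by
  have hsum := (exp_series_hasSum_exp' (𝕂 := 𝕂) N).map (mulVec.addMonoidHomLeft w)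
    (continuous_id.matrix_mulVec continuous_const)
  refine hsum.unique (hasSum_sum_of_ne_finset_zero fun j hj => ?_) |>.trans
    (Finset.sum_congr rfl fun j _ => smul_mulVec _ _ _)
  rw [Finset.mem_range, not_lt] at hj
  show ((j ! : 𝕂)⁻¹ • N ^ j) *ᵥ w = 0
  rw [smul_mulVec, ← Nat.sub_add_cancel hj, pow_add, ← mulVec_mulVec, hk, mulVec_zero, smul_zero]

theorem Complex.tendsto_exp_mul_mul_pow_atTop_nhds_zero {μ : ℂ} (hμ : μ.re < 0) (j : ℕ) :
    Tendsto (fun t : ℝ => Complex.exp (t * μ) * (t : ℂ) ^ j) atTop (𝓝 0) := by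
  rw [tendsto_zero_iff_norm_tendsto_zero]
  refine (tendsto_rpow_mul_exp_neg_mul_atTop_nhds_zero j (-μ.re) (neg_pos.2 hμ)).congr' ?_
  filter_upwards [eventually_ge_atTop 0] with t ht
  simp [Complex.norm_exp, abs_of_nonneg ht, mul_comm]

theorem Matrix.tendsto_exp_smul_mulVec_of_mem_maxGenEigenspace {M : Matrix m m ℂ} {μ : ℂ}
    (hμ : μ.re < 0) {w : m → ℂ} (hw : w ∈ Module.End.maxGenEigenspace (toLin' M) μ) :
    Tendsto (fun t : ℝ => exp ((t : ℂ) • M) *ᵥ w) atTop (𝓝 0) := by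
  obtain ⟨k, hk⟩ := (Module.End.mem_maxGenEigenspace _ _ _).1 hw
  set N := M - μ • 1
  have hNk : N ^ k *ᵥ w = 0 := by
    rw [← toLinAlgEquiv'_apply, map_pow, map_sub, map_smul, map_one]
    exact hk
  have hexp : ∀ t : ℝ, exp ((t : ℂ) • M) *ᵥ w =
      ∑ j ∈ range k, (Complex.exp (t * μ) * t ^ j * (j ! : ℂ)⁻¹) • (N ^ j *ᵥ w) := by
    intro t
    have hsplit : (t : ℂ) • M = (t : ℂ) • N + (t * μ) • 1 := by
      rw [smul_sub, smul_smul, sub_add_cancel]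
    rw [hsplit, exp_add_smul_one, smul_mulVec, exp_mulVec_eq_sum_of_pow_mulVec_eq_zero
      (by rw [smul_pow, smul_mulVec, hNk, smul_zero]), smul_sum, ← Complex.exp_eq_exp_ℂ]
    refine sum_congr rfl fun j _ => ?_
    rw [smul_pow, smul_mulVec, smul_smul, smul_smul]
    ring_nf
  simp_rw [hexp]
  simpa using tendsto_finsetSum (range k) fun j _ =>
    ((Complex.tendsto_exp_mul_mul_pow_atTop_nhds_zero hμ j).mul_const (j ! : ℂ)⁻¹).smul_const
      (N ^ j *ᵥ w)

theorem Matrix.tendsto_exp_smul_mulVec_atTop_nhds_zero {M : Matrix m m ℂ}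
    (hM : ∀ μ ∈ spectrum ℂ M, μ.re < 0) (v : m → ℂ) :
    Tendsto (fun t : ℝ => exp ((t : ℂ) • M) *ᵥ v) atTop (𝓝 0) := by
  have hv : v ∈ ⨆ μ, Module.End.maxGenEigenspace (toLin' M) μ := by
    rw [Module.End.iSup_maxGenEigenspace_eq_top]
    exact Submodule.mem_top
  refine Submodule.iSup_induction
    (motive := fun v => Tendsto (fun t : ℝ => exp ((t : ℂ) • M) *ᵥ v) atTop (𝓝 0)) _ hv
    (fun μ w hw => ?_) (by simp) fun x y hx hy => by simpa [mulVec_add] using hx.add hy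
  by_cases hw0 : w = 0
  · simp [hw0]
  have hμ : Module.End.HasUnifEigenvalue (toLin' M) μ ⊤ := (Submodule.ne_bot_iff _).2 ⟨w, hw, hw0⟩
  refine tendsto_exp_smul_mulVec_of_mem_maxGenEigenspace (hM μ ?_) hw
  rw [← spectrum_toLin']
  exact ((Module.End.hasUnifEigenvalue_iff_hasUnifEigenvalue_one (by simp)).1 hμ).mem_spectrum

theorem Matrix.tendsto_exp_smul_atTop_nhds_zero {M : Matrix m m ℂ}
    (hM : ∀ μ ∈ spectrum ℂ M, μ.re < 0) :
    Tendsto (fun t : ℝ => exp ((t : ℂ) • M)) atTop (𝓝 0) := by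
  refine tendsto_pi_nhds.2 fun i => tendsto_pi_nhds.2 fun j => ?_
  simpa [mulVec_single_one, Function.comp_def] using ((continuous_apply i).tendsto _).comp
    (tendsto_exp_smul_mulVec_atTop_nhds_zero hM (Pi.single j 1))

theorem Matrix.map_ofReal_exp (A : Matrix m m ℝ) :
    (exp A).map ((↑) : ℝ → ℂ) = exp (A.map (↑)) :=
  map_exp Complex.ofRealHom.mapMatrix (continuous_id.matrix_map Complex.continuous_ofReal) A

theorem IsHurwitz.tendsto_exp_smul_atTop_nhds_zero {n : ℕ} {A : Matrix (Fin n) (Fin n) ℝ}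
    (hA : IsHurwitz A) : Tendsto (fun t : ℝ => exp (t • A)) atTop (𝓝 0) := by
  have h := ((continuous_id.matrix_map Complex.continuous_re).tendsto 0).comp
    (Matrix.tendsto_exp_smul_atTop_nhds_zero hA)
  refine (h.congr fun t => ?_).trans ?_
  · have hsmul : (t : ℂ) • A.map (Complex.ofReal ·) = (t • A).map (Complex.ofReal ·) := by
      ext; simp
    ext i j
    simp only [Function.comp_apply, id, hsmul, ← Matrix.map_ofReal_exp, map_apply,
      Complex.ofReal_re]
  · simp

theorem Matrix.hasDerivAt_transpose_exp_smul_mul_mul_exp_smul (A P : Matrix m m ℝ) (t : ℝ) :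
    HasDerivAt (fun u : ℝ => (exp (u • A))ᵀ * P * exp (u • A))
      ((exp (t • A))ᵀ * (Aᵀ * P + P * A) * exp (t • A)) t := by
  have hT : ∀ u : ℝ, (exp (u • A))ᵀ = exp (u • Aᵀ) := fun u => by
    rw [← exp_transpose, transpose_smul]
  simp only [hT]
  exact (((hasDerivAt_exp_smul_const Aᵀ t).mul_const P).mul
    (hasDerivAt_exp_smul_const' A t)).congr_deriv (by noncomm_ring)

theorem Matrix.antitone_dotProduct_transpose_exp_smul_mul_mul_exp_smul_mulVec
    {A P : Matrix m m ℝ} (hLyap : (-(Aᵀ * P + P * A)).PosSemidef) (x : m → ℝ) :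
    Antitone fun t : ℝ => x ⬝ᵥ (((exp (t • A))ᵀ * P * exp (t • A)) *ᵥ x) := by
  let q : Matrix m m ℝ →ₗ[ℝ] ℝ :=
    { toFun := fun M => x ⬝ᵥ (M *ᵥ x)
      map_add' := fun M N => by simp only [add_mulVec, dotProduct_add]
      map_smul' := fun c M => by simp only [smul_mulVec, dotProduct_smul, RingHom.id_apply] }
  have hderiv : ∀ t : ℝ, HasDerivAt (fun t : ℝ => x ⬝ᵥ (((exp (t • A))ᵀ * P * exp (t • A)) *ᵥ x))
      ((exp (t • A) *ᵥ x) ⬝ᵥ ((Aᵀ * P + P * A) *ᵥ (exp (t • A) *ᵥ x))) t := fun t => by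
    refine (q.toContinuousLinearMap.hasFDerivAt.comp_hasDerivAt t
      (hasDerivAt_transpose_exp_smul_mul_mul_exp_smul A P t)).congr_deriv ?_
    change x ⬝ᵥ (((exp (t • A))ᵀ * (Aᵀ * P + P * A) * exp (t • A)) *ᵥ x) = _
    rw [← mulVec_mulVec, ← mulVec_mulVec, dotProduct_mulVec, vecMul_transpose]
  refine antitone_of_hasDerivAt_nonpos hderiv fun t => ?_
  have := hLyap.dotProduct_mulVec_nonneg (exp (t • A) *ᵥ x)
  rwa [star_trivial, neg_mulVec, dotProduct_neg, neg_nonneg] at this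

theorem Matrix.posSemidef_of_lyapunov_of_tendsto_exp_smul {A P : Matrix m m ℝ}
    (hA : Tendsto (fun t : ℝ => exp (t • A)) atTop (𝓝 0)) (hP : P.IsSymm)
    (hLyap : (-(Aᵀ * P + P * A)).PosSemidef) : P.PosSemidef := by
  refine .of_dotProduct_mulVec_nonneg (isHermitian_iff_isSymm.2 hP) fun x => ?_
  have hcont : Continuous fun M : Matrix m m ℝ => x ⬝ᵥ ((Mᵀ * P * M) *ᵥ x) := by fun_prop
  have hlim := (hcont.tendsto 0).comp hA
  simp only [transpose_zero, zero_mul, mul_zero, zero_mulVec, dotProduct_zero] at hlim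
  have hanti := antitone_dotProduct_transpose_exp_smul_mul_mul_exp_smul_mulVec hLyap x
  simpa [star_trivial, dotProduct_mulVec, vecMul_transpose] using
    le_of_tendsto hlim (eventually_ge_atTop 0 |>.mono fun t ht => hanti ht)

/-- If `A` is Hurwitz and `P` is symmetric with `AᵀP + PA ⪯ 0`, then `P ⪰ 0`. -/
theorem stmt_0 {n : ℕ} (A P : Matrix (Fin n) (Fin n) ℝ)
    (hA : IsHurwitz A) (hP : P.IsSymm)
    (hLyap : (-(Aᵀ * P + P * A)).PosSemidef) :
    P.PosSemidef :=
  posSemidef_of_lyapunov_of_tendsto_exp_smul hA.tendsto_exp_smul_atTop_nhds_zero hP hLyap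
end

section
/- Let A, B, C, D be real matrices of compatible sizes, λ ∈ ℝ with D − λI invertible, P symmetric, and suppose the block matrix [[AᵀP + PA − CᵀC, PB − Cᵀ(D−λI)], [BᵀP − (D−λI)ᵀC, −(D−λI)ᵀ(D−λI) + r²I]] ⪯ 0 for some r > 0. Then XᵀP + PX ⪯ 0 where X = A − B(D−λI)^{-1}C. -/
/-!
Conjugating the block inequality by `[I; -F]` with `F = (D - λI)⁻¹ C` eliminates the
off-diagonal blocks. Because `(D - λI) F = C`, the resulting form is
`-(XᵀP + PX) - r² FᵀF`, so `-(XᵀP + PX)` is the sum of two positive semidefinite matrices.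
-/

open Matrix

namespace Matrix

variable {m n R : Type*} [Fintype m] [Fintype n] [Ring R] [PartialOrder R] [StarRing R]

theorem PosSemidef.conj_fromRows_one_neg [DecidableEq n] {A₁₁ : Matrix n n R}
    {A₁₂ : Matrix n m R} {A₂₁ : Matrix m n R} {A₂₂ : Matrix m m R}
    (h : (fromBlocks A₁₁ A₁₂ A₂₁ A₂₂).PosSemidef) (F : Matrix m n R) :
    (A₁₁ - A₁₂ * F - Fᴴ * A₂₁ + Fᴴ * A₂₂ * F).PosSemidef := by
  have := h.conjTranspose_mul_mul_same (fromRows 1 (-F))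
  rw [conjTranspose_fromRows_eq_fromCols_conjTranspose, fromCols_mul_fromBlocks,
    fromCols_mul_fromRows] at this
  convert this using 1
  simp only [conjTranspose_one, conjTranspose_neg, Matrix.one_mul, Matrix.mul_one,
    Matrix.neg_mul, Matrix.mul_neg, Matrix.add_mul, Matrix.mul_assoc]
  abel

end Matrix

theorem stmt_11_general {n m : ℕ} (A : Matrix (Fin n) (Fin n) ℝ)
    (B : Matrix (Fin n) (Fin m) ℝ) (C : Matrix (Fin m) (Fin n) ℝ)
    (D : Matrix (Fin m) (Fin m) ℝ) (P : Matrix (Fin n) (Fin n) ℝ)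
    (lam r : ℝ)
    (hInv : IsUnit (D - lam • (1 : Matrix (Fin m) (Fin m) ℝ)))
    (hBlock : (-(Matrix.fromBlocks
        (Aᵀ * P + P * A - Cᵀ * C)
        (P * B - Cᵀ * (D - lam • (1 : Matrix (Fin m) (Fin m) ℝ)))
        (Bᵀ * P - (D - lam • (1 : Matrix (Fin m) (Fin m) ℝ))ᵀ * C)
        (-((D - lam • (1 : Matrix (Fin m) (Fin m) ℝ))ᵀ
            * (D - lam • (1 : Matrix (Fin m) (Fin m) ℝ)))
          + r ^ 2 • (1 : Matrix (Fin m) (Fin m) ℝ)))).PosSemidef) :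
    (-((A - B * (D - lam • (1 : Matrix (Fin m) (Fin m) ℝ))⁻¹ * C)ᵀ * P
        + P * (A - B * (D - lam • (1 : Matrix (Fin m) (Fin m) ℝ))⁻¹ * C))).PosSemidef := by
  set E := D - lam • (1 : Matrix (Fin m) (Fin m) ℝ)
  obtain ⟨F, hF⟩ : ∃ F, E⁻¹ * C = F := ⟨_, rfl⟩
  have hEF : E * F = C :=
    hF ▸ E.mul_nonsing_inv_cancel_left C ((isUnit_iff_isUnit_det E).mp hInv)
  rw [Matrix.mul_assoc B, hF]
  rw [fromBlocks_neg] at hBlock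
  have hSchur := hBlock.conj_fromRows_one_neg F
  rw [conjTranspose_eq_transpose_of_trivial] at hSchur
  have hFF : (Fᵀ * F).PosSemidef := by
    simpa only [conjTranspose_eq_transpose_of_trivial] using posSemidef_conjTranspose_mul_self F
  convert hSchur.add (hFF.smul (sq_nonneg r)) using 1
  rw [← hEF]
  simp only [transpose_sub, transpose_mul, Matrix.sub_mul, Matrix.mul_sub, Matrix.add_mul,
    Matrix.mul_add, Matrix.neg_mul, Matrix.mul_neg, Matrix.smul_mul, Matrix.mul_smul,
    Matrix.mul_one, Matrix.mul_assoc]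
  abel

/-- Schur complement reduction: if the indicated block matrix is `⪯ 0` and
`D - λI` is invertible, then `XᵀP + PX ⪯ 0` for `X = A - B(D-λI)⁻¹C`. -/
theorem stmt_11 {n m : ℕ} (A : Matrix (Fin n) (Fin n) ℝ)
    (B : Matrix (Fin n) (Fin m) ℝ) (C : Matrix (Fin m) (Fin n) ℝ)
    (D : Matrix (Fin m) (Fin m) ℝ) (P : Matrix (Fin n) (Fin n) ℝ)
    (lam r : ℝ) (hr : 0 < r) (hP : P.IsSymm)
    (hInv : IsUnit (D - lam • (1 : Matrix (Fin m) (Fin m) ℝ)))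
    (hBlock : (-(Matrix.fromBlocks
        (Aᵀ * P + P * A - Cᵀ * C)
        (P * B - Cᵀ * (D - lam • (1 : Matrix (Fin m) (Fin m) ℝ)))
        (Bᵀ * P - (D - lam • (1 : Matrix (Fin m) (Fin m) ℝ))ᵀ * C)
        (-((D - lam • (1 : Matrix (Fin m) (Fin m) ℝ))ᵀ
            * (D - lam • (1 : Matrix (Fin m) (Fin m) ℝ)))
          + r ^ 2 • (1 : Matrix (Fin m) (Fin m) ℝ)))).PosSemidef) :
    (-((A - B * (D - lam • (1 : Matrix (Fin m) (Fin m) ℝ))⁻¹ * C)ᵀ * P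
        + P * (A - B * (D - lam • (1 : Matrix (Fin m) (Fin m) ℝ))⁻¹ * C))).PosSemidef :=
  stmt_11_general A B C D P lam r hInv hBlock
end
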